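/- (Theorem 1, ideal AI systems.) Let Γ : Set ℕ be an infinite set, and let C : ℕ → ℕ → ℕ → Bool be a computable checker that is sound for Γ, i.e., for all x n p, C x n p = true implies x ∈ Γ ∧ K x > n. Then there exist x ∈ Γ and n : ℕ such that the statement 'every algorithm that outputs x has length > n' is true (K x > n), yet for every proof p : ℕ, C x n p = false. -/

import Mathlib

/-! A Berry-paradox argument via Kleene's recursion theorem. There is a program `c` which, on any
input, searches for a pair `(x, p)` such that `p` is accepted as a proof of `K x > encodeCode c`,
and outputs the first such `x`. If the search succeeded, `c` would be a program of length
`encodeCode c` outputting `x`, so `K x ≤ encodeCode c`, contradicting soundness. Hence no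
statement `K x > encodeCode c` has an accepted proof, while infinitely many such statements are
true, since only finitely many `x` have `K x ≤ n`. -/

noncomputable def K (x : ℕ) : ℕ :=
  sInf {m : ℕ | ∃ c : Nat.Partrec.Code, Nat.Partrec.Code.encodeCode c = m ∧ c.eval 0 = Part.some x}

open Nat.Partrec (Code)
open Nat.Partrec.Code

lemma K_spec (x : ℕ) : ∃ c : Code, encodeCode c = K x ∧ c.eval 0 = Part.some x :=
  Nat.sInf_mem (s := {m | ∃ c : Code, encodeCode c = m ∧ c.eval 0 = Part.some x})
    ⟨_, Code.const x, rfl, eval_const x 0⟩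

lemma K_le_encodeCode {x : ℕ} {c : Code} (h : c.eval 0 = Part.some x) : K x ≤ encodeCode c :=
  Nat.sInf_le ⟨c, rfl, h⟩

lemma K_injective : Function.Injective K := by
  intro x y hxy
  obtain ⟨c, hc, hcx⟩ := K_spec x
  obtain ⟨d, hd, hdy⟩ := K_spec y
  have hcd : c = d := by
    apply Encodable.encode_injective
    rw [encodeCode_eq, hc, hd, hxy]
  subst hcd
  exact Part.some_injective (hcx.symm.trans hdy)

lemma finite_setOf_K_le (n : ℕ) : {x | K x ≤ n}.Finite :=
  (Set.finite_Iic n).preimage K_injective.injOn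

lemma Set.Infinite.exists_lt_K {Γ : Set ℕ} (hΓ : Γ.Infinite) (n : ℕ) : ∃ x ∈ Γ, n < K x := by
  obtain ⟨x, hxΓ, hx⟩ := (hΓ.sdiff (finite_setOf_K_le n)).nonempty
  exact ⟨x, hxΓ, not_le.mp hx⟩

section Search

variable {C : ℕ → ℕ → ℕ → Bool}

/-- The `k`-th candidate for a proof of `K x > n` is the pair `(x, p) = Nat.unpair k`. -/
def acceptedAt (C : ℕ → ℕ → ℕ → Bool) (n k : ℕ) : Option ℕ :=
  bif C k.unpair.1 n k.unpair.2 then some k.unpair.1 else none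

def searchAccepted (C : ℕ → ℕ → ℕ → Bool) (n : ℕ) : Part ℕ :=
  Nat.rfindOpt (acceptedAt C n)

lemma exists_accepted_of_mem_searchAccepted {n x : ℕ} (h : x ∈ searchAccepted C n) :
    ∃ p, C x n p = true := by
  obtain ⟨k, hk⟩ := Nat.rfindOpt_spec h
  unfold acceptedAt at hk
  cases hC : C k.unpair.1 n k.unpair.2 <;> simp only [hC, cond_true, cond_false] at hk
  · exact absurd hk (Option.not_mem_none x)
  · exact Option.mem_some_iff.mp hk ▸ ⟨k.unpair.2, hC⟩

lemma searchAccepted_dom {n x p : ℕ} (h : C x n p = true) : (searchAccepted C n).Dom :=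
  Nat.rfindOpt_dom.mpr ⟨Nat.pair x p, x, by simp [acceptedAt, h]⟩

lemma searchAccepted_partrec (hC : Computable (fun q : ℕ × ℕ × ℕ => C q.1 q.2.1 q.2.2)) :
    Partrec (searchAccepted C) := by
  have hx : Computable fun q : ℕ × ℕ => q.2.unpair.1 :=
    (Computable.fst.comp Computable.unpair).comp Computable.snd
  have hclaim : Computable fun q : ℕ × ℕ => ((q.2.unpair.1, q.1, q.2.unpair.2) : ℕ × ℕ × ℕ) :=
    hx.pair (Computable.fst.pair ((Computable.snd.comp Computable.unpair).comp Computable.snd))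
  refine Partrec.rfindOpt (f := acceptedAt C) ?_
  exact (hC.comp hclaim).cond (Computable.option_some.comp hx) (Computable.const none)

/-- Chaitin's incompleteness theorem. -/
theorem exists_forall_eq_false_of_sound
    (hC : Computable (fun q : ℕ × ℕ × ℕ => C q.1 q.2.1 q.2.2))
    (hsound : ∀ x n p : ℕ, C x n p = true → n < K x) :
    ∃ n, ∀ x p : ℕ, C x n p = false := by
  have hself : Partrec₂ fun (c : Code) (_ : ℕ) => searchAccepted C (encodeCode c) := by
    have := (searchAccepted_partrec hC).comp
      (Computable.encode.comp (Computable.fst (α := Code) (β := ℕ)))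
    simpa [Partrec₂, encodeCode_eq] using this
  obtain ⟨c, hc⟩ := fixed_point₂ hself
  refine ⟨encodeCode c, fun x p => Bool.eq_false_iff.mpr fun hxp => ?_⟩
  obtain ⟨y, hy⟩ := Part.dom_iff_mem.mp (searchAccepted_dom hxp)
  obtain ⟨q, hyq⟩ := exists_accepted_of_mem_searchAccepted hy
  have hcy : c.eval 0 = Part.some y := Part.eq_some_iff.mpr (hc ▸ hy)
  exact (K_le_encodeCode hcy).not_gt (hsound y _ q hyq)

end Search

theorem ideal_ai_incompleteness (Γ : Set ℕ) (hΓ : Γ.Infinite)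
    (C : ℕ → ℕ → ℕ → Bool)
    (hC : Computable (fun q : ℕ × ℕ × ℕ => C q.1 q.2.1 q.2.2))
    (hsound : ∀ x n p : ℕ, C x n p = true → x ∈ Γ ∧ K x > n) :
    ∃ x ∈ Γ, ∃ n : ℕ, K x > n ∧ ∀ p : ℕ, C x n p = false := by
  obtain ⟨n, hn⟩ := exists_forall_eq_false_of_sound hC fun x n p h => (hsound x n p h).2
  obtain ⟨x, hxΓ, hx⟩ := hΓ.exists_lt_K n
  exact ⟨x, hxΓ, n, hx, hn x⟩
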